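/- Let Σ ∈ ℝ^{p×p} be symmetric positive definite, let D ∈ ℝ^{p×p} be a diagonal matrix such that G = [[Σ, Σ − D], [Σ − D, Σ]] is symmetric positive semidefinite, and let (X, X̃) ∼ N(0, G) be a Gaussian vector in ℝ^{2p}. Then for every subset S ⊆ {1,...,p}, the swapped vector Π_S(X, X̃) has the same distribution N(0, G), where Π_S is the permutation on ℝ^{2p} that exchanges coordinate j with coordinate j+p for every j ∈ S; i.e., (X, X̃) satisfies the knockoff exchangeability property. -/

import Mathlib

/-!
Since `Σ` and `Σ − D` agree off the diagonal, the covariance `G` is invariant under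
conjugation by the swap `Π_S`, i.e. `Π_S` commutes with `G` and hence with `G^{1/2}`
(a continuous function of `G`). The standard Gaussian `Z` is invariant under coordinate
permutations, so `Π_S G^{1/2} Z = G^{1/2} Π_S Z` has the law of `G^{1/2} Z`.
-/

open Matrix MeasureTheory ProbabilityTheory

/-- The coordinate permutation on `ℝ^{2p}` (indexed by `Fin p ⊕ Fin p`, where `Sum.inl j`
is coordinate `j` and `Sum.inr j` is coordinate `j + p`) that swaps the `j`-th and
`(j+p)`-th coordinates for every `j ∈ S` and fixes all other coordinates. -/
def swapFun {p : ℕ} (S : Finset (Fin p)) : (Fin p ⊕ Fin p) → (Fin p ⊕ Fin p)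
  | Sum.inl j => if j ∈ S then Sum.inr j else Sum.inl j
  | Sum.inr j => if j ∈ S then Sum.inl j else Sum.inr j

/-- The positive semidefinite square root of a positive semidefinite matrix
(removed from Mathlib; restored with its old definition). -/
noncomputable def Matrix.PosSemidef.sqrt {n : Type*} [Fintype n] [DecidableEq n]
    {A : Matrix n n ℝ} (hA : A.PosSemidef) : Matrix n n ℝ :=
  hA.1.eigenvectorUnitary.1 * diagonal ((↑) ∘ (√·) ∘ hA.1.eigenvalues) *
  (star hA.1.eigenvectorUnitary : Matrix n n ℝ)

/-- The standard Gaussian measure `N(0, I)` on `ι → ℝ`. -/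
noncomputable def stdGaussian (ι : Type*) [Fintype ι] : Measure (ι → ℝ) :=
  Measure.pi fun _ : ι => gaussianReal 0 1

/-- The centered Gaussian measure `N(0, V)` on `ι → ℝ` with covariance the symmetric
positive semidefinite matrix `V`, realized as the pushforward of the standard Gaussian
under multiplication by the symmetric PSD square root `V^{1/2}`. -/
noncomputable def gaussianVec {ι : Type*} [Fintype ι] [DecidableEq ι]
    {V : Matrix ι ι ℝ} (hV : V.PosSemidef) : Measure (ι → ℝ) :=
  (stdGaussian ι).map fun z => hV.sqrt *ᵥ z

namespace Matrix

lemma PosSemidef.sqrt_eq_cfc {n : Type*} [Fintype n] [DecidableEq n]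
    {A : Matrix n n ℝ} (hA : A.PosSemidef) : hA.sqrt = cfc Real.sqrt A := by
  rw [hA.1.cfc_eq]
  simp [IsHermitian.cfc, PosSemidef.sqrt, Unitary.conjStarAlgAut_apply, Function.comp_def]

lemma commute_permMatrix_of_submatrix_eq {n R : Type*} [Fintype n] [DecidableEq n]
    [NonAssocSemiring R] {σ : Equiv.Perm n} {M : Matrix n n R} (hM : M.submatrix σ σ = M) :
    Commute (σ.permMatrix R) M := by
  change σ.toPEquiv.toMatrix * M = M * σ.toPEquiv.toMatrix
  rw [PEquiv.toMatrix_toPEquiv_mul, PEquiv.mul_toMatrix_toPEquiv]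
  conv_rhs => rw [← hM]
  ext i j
  simp

lemma PosSemidef.commute_sqrt {n : Type*} [Fintype n] [DecidableEq n]
    {A B : Matrix n n ℝ} (hA : A.PosSemidef) (hAB : Commute A B) : Commute hA.sqrt B := by
  rw [hA.sqrt_eq_cfc]
  exact hAB.cfc_real Real.sqrt

end Matrix

lemma stdGaussian_map_comp_equiv {ι : Type*} [Fintype ι] (σ : ι ≃ ι) :
    (stdGaussian ι).map (fun x => x ∘ σ) = stdGaussian ι := by
  have h := (measurePreserving_piCongrLeft (fun _ : ι => gaussianReal 0 1) σ.symm).map_eq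
  rw [_root_.stdGaussian]
  convert h using 2
  ext x i
  simp [MeasurableEquiv.coe_piCongrLeft, Equiv.piCongrLeft_apply]

lemma gaussianVec_map_comp_perm {ι : Type*} [Fintype ι] [DecidableEq ι] {V : Matrix ι ι ℝ}
    (hV : V.PosSemidef) {σ : Equiv.Perm ι} (hσ : V.submatrix σ σ = V) :
    (gaussianVec hV).map (fun x => x ∘ σ) = gaussianVec hV := by
  have hcomm : Commute (σ.permMatrix ℝ) hV.sqrt :=
    (hV.commute_sqrt (commute_permMatrix_of_submatrix_eq hσ).symm).symm
  have hswap : (fun x => x ∘ σ) ∘ (hV.sqrt *ᵥ ·) = (hV.sqrt *ᵥ ·) ∘ (fun z => z ∘ σ) := by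
    funext z
    simp only [Function.comp_apply]
    rw [← permMatrix_mulVec, ← permMatrix_mulVec, mulVec_mulVec, mulVec_mulVec, hcomm.eq]
  rw [gaussianVec, Measure.map_map (by fun_prop) (by fun_prop), hswap,
    ← Measure.map_map (by fun_prop) (by fun_prop), stdGaussian_map_comp_equiv]

lemma swapFun_involutive {p : ℕ} (S : Finset (Fin p)) : Function.Involutive (swapFun S) := by
  rintro (j | j) <;> by_cases h : j ∈ S <;> simp [swapFun, h]

def swapPerm {p : ℕ} (S : Finset (Fin p)) : Equiv.Perm (Fin p ⊕ Fin p) :=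
  (swapFun_involutive S).toPerm

lemma fromBlocks_submatrix_swapPerm {p : ℕ} (S : Finset (Fin p)) (A : Matrix (Fin p) (Fin p) ℝ)
    (d : Fin p → ℝ) :
    (fromBlocks A (A - diagonal d) (A - diagonal d) A).submatrix (swapPerm S) (swapPerm S) =
      fromBlocks A (A - diagonal d) (A - diagonal d) A := by
  have hoff : ∀ i j, i ∈ S → j ∉ S →
      (A - diagonal d) i j = A i j ∧ (A - diagonal d) j i = A j i := by
    intro i j hi hj
    have hij : i ≠ j := fun h => hj (h ▸ hi)
    simp [diagonal_apply_ne _ hij, diagonal_apply_ne _ hij.symm]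
  ext (i | i) (j | j) <;> by_cases hi : i ∈ S <;> by_cases hj : j ∈ S <;>
    simp [swapPerm, swapFun, hi, hj, hoff]

theorem stmt_19_general (p : ℕ) (Sg : Matrix (Fin p) (Fin p) ℝ)
    (dvec : Fin p → ℝ)
    (hG : (Matrix.fromBlocks Sg (Sg - Matrix.diagonal dvec)
      (Sg - Matrix.diagonal dvec) Sg).PosSemidef)
    {Ω : Type*} [MeasurableSpace Ω] (μ : Measure Ω)
    (W : Ω → (Fin p ⊕ Fin p) → ℝ) (hW : Measurable W)
    (hWlaw : Measure.map W μ = gaussianVec hG) (S : Finset (Fin p)) :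
    Measure.map (fun ω => W ω ∘ swapFun S) μ = gaussianVec hG := by
  rw [← gaussianVec_map_comp_perm hG (fromBlocks_submatrix_swapPerm S Sg dvec), ← hWlaw,
    Measure.map_map (by fun_prop) hW]
  rfl

/-- **Knockoff exchangeability.** Let `Σ` be symmetric positive definite and `D` a
diagonal matrix with `G = [[Σ, Σ − D], [Σ − D, Σ]]` positive semidefinite. If
`(X, X̃) ∼ N(0, G)` then for every `S ⊆ {1,…,p}` the swapped vector `Π_S (X, X̃)` has
the same distribution `N(0, G)`. -/
theorem stmt_19 (p : ℕ) (Sg : Matrix (Fin p) (Fin p) ℝ) (hSg : Sg.PosDef)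
    (dvec : Fin p → ℝ)
    (hG : (Matrix.fromBlocks Sg (Sg - Matrix.diagonal dvec)
      (Sg - Matrix.diagonal dvec) Sg).PosSemidef)
    {Ω : Type*} [MeasurableSpace Ω] (μ : Measure Ω) [IsProbabilityMeasure μ]
    (W : Ω → (Fin p ⊕ Fin p) → ℝ) (hW : Measurable W)
    (hWlaw : Measure.map W μ = gaussianVec hG) (S : Finset (Fin p)) :
    Measure.map (fun ω => W ω ∘ swapFun S) μ = gaussianVec hG :=
  stmt_19_general p Sg dvec hG μ W hW hWlaw S
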